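/- arXiv:2002.04697 — 3 statements merged into one kernel-verified Lean document; each statement's English description precedes it below -/
import Mathlib

section
/- Suppose Σ_{i=1}^n w_i ≤ M₁ and Σ_{i=1}^n Σ_{j=1}^n |Cov(V_{i,t}², V_{j,t}²)| ≤ M₃. Then limsup_{T→∞} T · E[ | (1/(T−t₀)) Σ_{t=t₀}^{T−1} Σ_{i=1}^n w_i V_{i,t+1}² − err |² ] ≤ M₁² M₃, where t₀ = t₀(T). -/
/-! The period terms `Zₜ = ∑ᵢ wᵢ V²_{i,t+1}` are independent, have mean `err`, and have variance
`∑ᵢ ∑ⱼ wᵢ wⱼ Cov(V²ᵢ, V²ⱼ) ≤ M₁² M₃`. Hence the mean squared error of their average over the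
`T − t₀` periods is at most `M₁² M₃ / (T − t₀)`, and `T / (T − t₀) → 1` because `t₀ / T → 0`. -/

open MeasureTheory ProbabilityTheory Filter Finset

/-- Covariance of two real-valued random variables. -/
noncomputable def covar {Ω : Type*} [MeasurableSpace Ω] (μ : Measure Ω) (X Y : Ω → ℝ) : ℝ :=
  ∫ ω, (X ω - ∫ ω', X ω' ∂μ) * (Y ω - ∫ ω', Y ω' ∂μ) ∂μ

open scoped ENNReal Topology

lemma MeasureTheory.MemLp.sq_of_memLp_four {Ω : Type*} [MeasurableSpace Ω] {μ : Measure Ω}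
    {f : Ω → ℝ} (hf : MemLp f 4 μ) : MemLp (fun ω => f ω ^ 2) 2 μ := by
  have h42 : (4 : ℝ≥0∞) / 2 = 2 :=
    ((ENNReal.eq_div_iff (by norm_num) (by norm_num)).2 (by norm_num)).symm
  simpa [h42] using hf.norm_rpow_div 2

lemma Finset.sum_sum_mul_mul_le_sq_mul_sum_sum_abs {ι : Type*} (s : Finset ι) {w : ι → ℝ}
    (hw : ∀ i ∈ s, 0 ≤ w i) {M : ℝ} (hM : ∑ i ∈ s, w i ≤ M) (c : ι → ι → ℝ) :
    ∑ i ∈ s, ∑ j ∈ s, w i * w j * c i j ≤ M ^ 2 * ∑ i ∈ s, ∑ j ∈ s, |c i j| := by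
  have hwM : ∀ i ∈ s, w i ≤ M := fun i hi => (single_le_sum hw hi).trans hM
  simp_rw [mul_sum, sq]
  refine sum_le_sum fun i hi => sum_le_sum fun j hj => ?_
  calc w i * w j * c i j ≤ w i * w j * |c i j| :=
        mul_le_mul_of_nonneg_left (le_abs_self _) (mul_nonneg (hw i hi) (hw j hj))
    _ ≤ M * M * |c i j| := mul_le_mul_of_nonneg_right
        (mul_le_mul (hwM i hi) (hwM j hj) (hw j hj) ((hw i hi).trans (hwM i hi))) (abs_nonneg _)

lemma Filter.tendsto_div_sub_of_tendsto_div_zero {α : Type*} {l : Filter α} {u a : α → ℝ}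
    (hu : ∀ᶠ x in l, u x ≠ 0) (h : Tendsto (fun x => a x / u x) l (𝓝 0)) :
    Tendsto (fun x => u x / (u x - a x)) l (𝓝 1) := by
  have hinv := (tendsto_const_nhds (x := (1 : ℝ))).sub h |>.inv₀ (by norm_num)
  rw [sub_zero, inv_one] at hinv
  refine hinv.congr' ?_
  filter_upwards [hu] with x hx
  rw [one_sub_div hx, inv_div]

namespace ProbabilityTheory

variable {Ω : Type*} [MeasurableSpace Ω] {μ : Measure Ω}

lemma variance_fun_sum_const_mul [IsFiniteMeasure μ] {ι : Type*} [Fintype ι] {X : ι → Ω → ℝ}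
    (hX : ∀ i, MemLp (X i) 2 μ) (w : ι → ℝ) :
    Var[fun ω => ∑ i, w i * X i ω; μ] = ∑ i, ∑ j, w i * w j * cov[X i, X j; μ] := by
  rw [variance_fun_sum fun i => (hX i).const_mul (w i)]
  refine sum_congr rfl fun i _ => sum_congr rfl fun j _ => ?_
  rw [covariance_const_mul_left, covariance_const_mul_right]
  ring

lemma integral_sq_avg_sub_le [IsProbabilityMeasure μ] {ι : Type*} {Z : ι → Ω → ℝ}
    {s : Finset ι} (hs : s.Nonempty) (hZ : ∀ t ∈ s, MemLp (Z t) 2 μ)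
    (hindep : Set.Pairwise s fun t u => Z t ⟂ᵢ[μ] Z u) {c B : ℝ}
    (hmean : ∀ t ∈ s, μ[Z t] = c) (hvar : ∀ t ∈ s, Var[Z t; μ] ≤ B) :
    ∫ ω, ((#s : ℝ)⁻¹ * ∑ t ∈ s, Z t ω - c) ^ 2 ∂μ ≤ B / #s := by
  have hcard : (0 : ℝ) < #s := by exact_mod_cast hs.card_pos
  have hsum : MemLp (∑ t ∈ s, Z t) 2 μ := memLp_finsetSum' s hZ
  have havg_mean : μ[fun ω => (#s : ℝ)⁻¹ * ∑ t ∈ s, Z t ω] = c := by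
    rw [integral_const_mul, integral_finsetSum s fun t ht => (hZ t ht).integrable one_le_two,
      sum_congr rfl hmean, sum_const, nsmul_eq_mul, inv_mul_cancel_left₀ hcard.ne']
  have havg : MemLp (fun ω => (#s : ℝ)⁻¹ * ∑ t ∈ s, Z t ω) 2 μ := by
    simpa only [Finset.sum_apply] using hsum.const_mul (#s : ℝ)⁻¹
  rw [← havg_mean, ← variance_eq_integral havg.aemeasurable, variance_const_mul, ← sum_fn,
    IndepFun.variance_sum hZ hindep, inv_pow, ← div_eq_inv_mul,
    div_le_div_iff₀ (by positivity) hcard]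
  calc (∑ t ∈ s, Var[Z t; μ]) * #s ≤ (#s * B) * #s := by
        gcongr
        simpa using sum_le_sum hvar
    _ = B * (#s : ℝ) ^ 2 := by ring

end ProbabilityTheory

theorem statement0_general
    {Ω : Type*} [MeasurableSpace Ω] (μ : Measure Ω) [IsProbabilityMeasure μ]
    (n : ℕ) (w : Fin n → ℝ) (hw : ∀ i, 0 < w i)
    (V : ℕ → Ω → Fin n → ℝ)
    (hV4 : ∀ t i, MemLp (fun ω => V t ω i) 4 μ)
    (hVindep : iIndepFun V μ)
    (hVmean : ∀ t i, (∫ ω, V t ω i ∂μ) = 0)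
    (S : Matrix (Fin n) (Fin n) ℝ)
    (hScov : ∀ t i j, covar μ (fun ω => V t ω i) (fun ω => V t ω j) = S i j)
    (t₀ : ℕ → ℕ) (ht₀ : ∀ T, 2 ≤ T → 1 ≤ t₀ T ∧ t₀ T ≤ T - 1)
    (ht₀lim : Tendsto (fun T : ℕ => (t₀ T : ℝ) / T) atTop (nhds 0))
    (M₁ M₃ : ℝ)
    (hwsum : ∑ i, w i ≤ M₁)
    (hcov2 : ∀ t, ∑ i, ∑ j,
      |covar μ (fun ω => (V t ω i) ^ 2) (fun ω => (V t ω j) ^ 2)| ≤ M₃) :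
    limsup (fun T : ℕ => (T : ℝ) *
      ∫ ω, |((T : ℝ) - (t₀ T : ℝ))⁻¹ *
          (∑ t ∈ Finset.Ico (t₀ T) T, ∑ i, w i * (V (t + 1) ω i) ^ 2) -
          ∑ i, w i * S i i| ^ 2 ∂μ) atTop ≤ M₁ ^ 2 * M₃ := by
  set Z : ℕ → Ω → ℝ := fun t ω => ∑ i, w i * V (t + 1) ω i ^ 2
  have hsq : ∀ t i, MemLp (fun ω => V t ω i ^ 2) 2 μ := fun t i => (hV4 t i).sq_of_memLp_four
  have hZ : ∀ t, MemLp (Z t) 2 μ := fun t =>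
    memLp_finsetSum _ fun i _ => (hsq (t + 1) i).const_mul (w i)
  have hZ_mean : ∀ t, μ[Z t] = ∑ i, w i * S i i := fun t => by
    rw [integral_finsetSum _ fun i _ => ((hsq (t + 1) i).integrable one_le_two).const_mul (w i)]
    refine sum_congr rfl fun i _ => ?_
    rw [integral_const_mul, ← hScov (t + 1) i i]
    simp [covar, hVmean, sq]
  have hZ_var : ∀ t, Var[Z t; μ] ≤ M₁ ^ 2 * M₃ := fun t => by
    rw [variance_fun_sum_const_mul (hsq (t + 1)) w]
    refine (sum_sum_mul_mul_le_sq_mul_sum_sum_abs univ (fun i _ => (hw i).le) hwsum _).trans ?_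
    gcongr
    exact hcov2 (t + 1)
  have hZ_indep : ∀ s t, s ≠ t → Z s ⟂ᵢ[μ] Z t := fun s t hst => by
    have hφ : Measurable fun v : Fin n → ℝ => ∑ i, w i * v i ^ 2 := by fun_prop
    exact (hVindep.indepFun (by omega : s + 1 ≠ t + 1)).comp hφ hφ
  have hlim : Tendsto (fun T : ℕ => (T : ℝ) / (T - t₀ T) * (M₁ ^ 2 * M₃)) atTop
      (𝓝 (M₁ ^ 2 * M₃)) := by
    simpa using ((tendsto_div_sub_of_tendsto_div_zero
      ((eventually_ne_atTop 0).mono fun T hT => Nat.cast_ne_zero.2 hT) ht₀lim).mul_const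
      (M₁ ^ 2 * M₃))
  refine (limsup_le_limsup ?_ (isCoboundedUnder_le_of_le atTop fun T => by positivity)
    hlim.isBoundedUnder_le).trans_eq hlim.limsup_eq
  filter_upwards [eventually_ge_atTop 2] with T hT
  have hlt : t₀ T < T := by have := (ht₀ T hT).2; omega
  have hcard : (#(Ico (t₀ T) T) : ℝ) = T - t₀ T := by
    rw [Nat.card_Ico, Nat.cast_sub hlt.le]
  have hL2 := integral_sq_avg_sub_le (nonempty_Ico.2 hlt) (fun t _ => hZ t)
    (fun s _ t _ hst => hZ_indep s t hst) (fun t _ => hZ_mean t) (fun t _ => hZ_var t)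
  rw [hcard] at hL2
  simp_rw [sq_abs]
  rw [div_mul_eq_mul_div, mul_div_assoc]
  gcongr

/-- Lemma 1 of the paper: under the weight bound `∑ wᵢ ≤ M₁` and the fourth-moment
covariance bound `∑ᵢ∑ⱼ |Cov(Vᵢₜ², Vⱼₜ²)| ≤ M₃`,
`limsup_T  T · E[ | (1/(T−t₀)) ∑_{t=t₀}^{T−1} ∑ᵢ wᵢ V_{i,t+1}² − err |² ] ≤ M₁² M₃`. -/
theorem statement0
    {Ω : Type*} [MeasurableSpace Ω] (μ : Measure Ω) [IsProbabilityMeasure μ]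
    (n : ℕ) (hn : 1 ≤ n) (w : Fin n → ℝ) (hw : ∀ i, 0 < w i)
    (V : ℕ → Ω → Fin n → ℝ) (hVmeas : ∀ t, Measurable (V t))
    (hV4 : ∀ t i, MemLp (fun ω => V t ω i) 4 μ)
    (hVindep : iIndepFun V μ)
    (hVid : ∀ s t, IdentDistrib (V s) (V t) μ μ)
    (hVmean : ∀ t i, (∫ ω, V t ω i ∂μ) = 0)
    (S : Matrix (Fin n) (Fin n) ℝ) (hSpd : S.PosDef)
    (hScov : ∀ t i j, covar μ (fun ω => V t ω i) (fun ω => V t ω j) = S i j)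
    (t₀ : ℕ → ℕ) (ht₀ : ∀ T, 2 ≤ T → 1 ≤ t₀ T ∧ t₀ T ≤ T - 1)
    (ht₀lim : Tendsto (fun T : ℕ => (t₀ T : ℝ) / T) atTop (nhds 0))
    (M₁ M₃ : ℝ) (hM₁ : 0 < M₁) (hM₃ : 0 < M₃)
    (hwsum : ∑ i, w i ≤ M₁)
    (hcov2 : ∀ t, ∑ i, ∑ j,
      |covar μ (fun ω => (V t ω i) ^ 2) (fun ω => (V t ω j) ^ 2)| ≤ M₃) :
    limsup (fun T : ℕ => (T : ℝ) *
      ∫ ω, |((T : ℝ) - (t₀ T : ℝ))⁻¹ *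
          (∑ t ∈ Finset.Ico (t₀ T) T, ∑ i, w i * (V (t + 1) ω i) ^ 2) -
          ∑ i, w i * S i i| ^ 2 ∂μ) atTop ≤ M₁ ^ 2 * M₃ :=
  statement0_general μ n w hw V hV4 hVindep hVmean S hScov t₀ ht₀ ht₀lim M₁ M₃ hwsum hcov2
end

section
/- Suppose Σ_{i=1}^n w_i ≤ M₁, Σ_{i=1}^n Σ_{j=1}^n |Cov(V_{i,t}, V_{j,t})| ≤ M₂ (so in particular E[V_{i,t}²] ≤ M₂ for every i, t), and E[Σ_{i=1}^n D_{i,t}²] ≤ M₄/t for all t ≥ 1. Then limsup_{T→∞} √T · E[ | (2/(T−t₀)) Σ_{t=t₀}^{T−1} Σ_{i=1}^n w_i V_{i,t+1} D_{i,t} | ] ≤ 4 M₁ √M₂ √M₄, where t₀ = t₀(T). -/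
/-!
Bound the expectation of the absolute value by the triangle inequality over `t` and `i`, and
each term `E|wᵢ V_{i,t+1} D_{i,t}|` by Cauchy–Schwarz: `E[V_{i,t+1}²]` is a diagonal covariance
because `V` is centred, so it is at most `M₂`, and `E[D_{i,t}²] ≤ M₄ / t`. Since
`∑_{t=1}^{T} t^{-1/2} ≤ 2√T`, the `T`-th term is at most `4 M₁ √M₂ √M₄ · T / (T - t₀)`,
which tends to `4 M₁ √M₂ √M₄` because `t₀ / T → 0`.
-/

open MeasureTheory ProbabilityTheory Filter Finset

lemma sum_Ico_inv_sqrt_le (N : ℕ) : ∑ t ∈ Ico 1 (N + 1), (√t)⁻¹ ≤ 2 * √N := by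
  induction N with
  | zero => simp
  | succ N ih =>
    rw [sum_Ico_succ_top (by omega), Nat.cast_succ]
    have hpos : 0 < √((N : ℝ) + 1) := Real.sqrt_pos.mpr (by positivity)
    -- `2 (√(N+1) - √N) = 2 / (√(N+1) + √N) ≥ 1 / √(N+1)`
    have hstep : (√((N : ℝ) + 1))⁻¹ ≤ 2 * √((N : ℝ) + 1) - 2 * √N := by
      rw [inv_eq_one_div, div_le_iff₀ hpos]
      nlinarith [Real.sq_sqrt (by positivity : (0 : ℝ) ≤ N + 1),
        Real.sq_sqrt (N.cast_nonneg : (0 : ℝ) ≤ N), sq_nonneg (√N - √((N : ℝ) + 1))]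
    linarith

lemma tendsto_div_sub_of_tendsto_div_zero {a : ℕ → ℝ}
    (h : Tendsto (fun T : ℕ => a T / T) atTop (nhds 0)) :
    Tendsto (fun T : ℕ => (T : ℝ) / (T - a T)) atTop (nhds 1) := by
  have hinv : Tendsto (fun T : ℕ => (1 - a T / T)⁻¹) atTop (nhds 1) := by
    simpa using (tendsto_const_nhds.sub h).inv₀ (by norm_num : (1 : ℝ) - 0 ≠ 0)
  refine hinv.congr' ?_
  filter_upwards [eventually_ge_atTop 1] with T hT
  rw [one_sub_div (by positivity), inv_div]

section Integrals

variable {Ω : Type*} [MeasurableSpace Ω] {μ : Measure Ω}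

lemma integral_abs_mul_le_sqrt_mul_sqrt {f g : Ω → ℝ} (hf : MemLp f 2 μ) (hg : MemLp g 2 μ) :
    ∫ ω, |f ω * g ω| ∂μ ≤ √(∫ ω, f ω ^ 2 ∂μ) * √(∫ ω, g ω ^ 2 ∂μ) := by
  have h := integral_mul_norm_le_Lp_mul_Lq (f := f) (g := g) Real.HolderConjugate.two_two
    (by rwa [ENNReal.ofReal_ofNat]) (by rwa [ENNReal.ofReal_ofNat])
  simpa only [Real.norm_eq_abs, ← abs_mul, Real.rpow_two, sq_abs, Real.sqrt_eq_rpow] using h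

lemma integral_abs_sum_le_sum_integral_abs {ι : Type*} (s : Finset ι) {F : ι → Ω → ℝ}
    (hF : ∀ k ∈ s, Integrable (F k) μ) :
    ∫ ω, |∑ k ∈ s, F k ω| ∂μ ≤ ∑ k ∈ s, ∫ ω, |F k ω| ∂μ := by
  rw [← integral_finsetSum s fun k hk => (hF k hk).abs]
  exact integral_mono (integrable_finsetSum s hF).abs
    (integrable_finsetSum s fun k hk => (hF k hk).abs) fun ω => abs_sum_le_sum_abs _ _

lemma integral_sq_le_sum_sum_abs_covar {ι : Type*} [Fintype ι] {X : ι → Ω → ℝ} {i : ι}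
    (hmean : ∫ ω, X i ω ∂μ = 0) :
    ∫ ω, X i ω ^ 2 ∂μ ≤ ∑ k, ∑ j, |covar μ (X k) (X j)| := by
  have hvar : covar μ (X i) (X i) = ∫ ω, X i ω ^ 2 ∂μ := by
    simp only [covar, hmean, sub_zero, sq]
  calc ∫ ω, X i ω ^ 2 ∂μ ≤ |covar μ (X i) (X i)| := hvar ▸ le_abs_self _
    _ ≤ ∑ j, |covar μ (X i) (X j)| :=
      single_le_sum (f := fun j => |covar μ (X i) (X j)|) (fun _ _ => abs_nonneg _) (mem_univ i)
    _ ≤ ∑ k, ∑ j, |covar μ (X k) (X j)| :=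
      single_le_sum (f := fun k => ∑ j, |covar μ (X k) (X j)|)
        (fun _ _ => sum_nonneg fun _ _ => abs_nonneg _) (mem_univ i)

lemma integral_sq_le_integral_sum_sq {ι : Type*} [Fintype ι] {Y : ι → Ω → ℝ}
    (hY : ∀ i, MemLp (Y i) 2 μ) (i : ι) :
    ∫ ω, Y i ω ^ 2 ∂μ ≤ ∫ ω, ∑ j, Y j ω ^ 2 ∂μ :=
  integral_mono (hY i).integrable_sq (integrable_finsetSum _ fun j _ => (hY j).integrable_sq)
    fun ω => single_le_sum (f := fun j => Y j ω ^ 2) (fun _ _ => sq_nonneg _) (mem_univ i)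

lemma integral_abs_sum_mul_mul_le {ι : Type*} [Fintype ι] {w : ι → ℝ} (hw : ∀ i, 0 ≤ w i)
    {X Y : ι → Ω → ℝ} (hX : ∀ i, MemLp (X i) 2 μ) (hY : ∀ i, MemLp (Y i) 2 μ) {a b : ℝ}
    (ha : ∀ i, ∫ ω, X i ω ^ 2 ∂μ ≤ a) (hb : ∀ i, ∫ ω, Y i ω ^ 2 ∂μ ≤ b) :
    ∫ ω, |∑ i, w i * X i ω * Y i ω| ∂μ ≤ (∑ i, w i) * (√a * √b) := by
  have hXY (i : ι) : Integrable (fun ω => X i ω * Y i ω) μ := (hX i).integrable_mul (hY i)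
  calc ∫ ω, |∑ i, w i * X i ω * Y i ω| ∂μ
      ≤ ∑ i, ∫ ω, |w i * X i ω * Y i ω| ∂μ :=
        integral_abs_sum_le_sum_integral_abs _ fun i _ => by
          simpa only [mul_assoc] using (hXY i).const_mul (w i)
    _ = ∑ i, w i * ∫ ω, |X i ω * Y i ω| ∂μ := by
        refine sum_congr rfl fun i _ => ?_
        simp only [mul_assoc, abs_mul (w i), abs_of_nonneg (hw i), integral_const_mul]
    _ ≤ ∑ i, w i * (√a * √b) := by
        gcongr with i
        · exact hw i
        · exact (integral_abs_mul_le_sqrt_mul_sqrt (hX i) (hY i)).trans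
            (by gcongr; exacts [ha i, hb i])
    _ = (∑ i, w i) * (√a * √b) := sum_mul _ _ _ |>.symm

lemma sqrt_mul_integral_abs_avg_le {Z : ℕ → Ω → ℝ} {C : ℝ} (hC : 0 ≤ C)
    (hZ : ∀ t, Integrable (Z t) μ) (hZC : ∀ t, 1 ≤ t → ∫ ω, |Z t ω| ∂μ ≤ C * (√t)⁻¹)
    {k T : ℕ} (hk : 1 ≤ k) (hkT : k < T) :
    √T * ∫ ω, |2 * ((T : ℝ) - k)⁻¹ * ∑ t ∈ Ico k T, Z t ω| ∂μ ≤ 4 * C * (T / (T - k)) := by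
  have hTk : 0 < (T : ℝ) - k := sub_pos.mpr (by exact_mod_cast hkT)
  have hsum : ∑ t ∈ Ico k T, (√t)⁻¹ ≤ 2 * √T := by
    refine (sum_le_sum_of_subset_of_nonneg ?_ fun t _ _ => by positivity).trans
      (sum_Ico_inv_sqrt_le T)
    exact Ico_subset_Ico hk (by omega)
  calc √T * ∫ ω, |2 * ((T : ℝ) - k)⁻¹ * ∑ t ∈ Ico k T, Z t ω| ∂μ
      = √T * (2 * ((T : ℝ) - k)⁻¹) * ∫ ω, |∑ t ∈ Ico k T, Z t ω| ∂μ := by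
        have hc : 0 < 2 * ((T : ℝ) - k)⁻¹ := by positivity
        simp_rw [mul_assoc √(T : ℝ), abs_mul _ (∑ t ∈ Ico k T, _), abs_of_pos hc,
          integral_const_mul]
    _ ≤ √T * (2 * ((T : ℝ) - k)⁻¹) * ∑ t ∈ Ico k T, C * (√t)⁻¹ := by
        gcongr
        refine (integral_abs_sum_le_sum_integral_abs _ fun t _ => hZ t).trans
          (sum_le_sum fun t ht => hZC t (hk.trans (mem_Ico.mp ht).1))
    _ ≤ √T * (2 * ((T : ℝ) - k)⁻¹) * (C * (2 * √T)) := by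
        rw [← mul_sum]
        gcongr
    _ = 4 * C * (T / (T - k)) := by
        rw [div_eq_mul_inv]
        linear_combination (4 * C * ((T : ℝ) - k)⁻¹) * Real.mul_self_sqrt T.cast_nonneg

end Integrals

theorem statement2_general
    {Ω : Type*} [MeasurableSpace Ω] (μ : Measure Ω)
    (n : ℕ) (w : Fin n → ℝ) (hw : ∀ i, 0 < w i)
    (V : ℕ → Ω → Fin n → ℝ)
    (hV2 : ∀ t i, MemLp (fun ω => V t ω i) 2 μ)
    (hVmean : ∀ t i, (∫ ω, V t ω i ∂μ) = 0)
    (D : ℕ → Ω → Fin n → ℝ)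
    (hD2 : ∀ t i, MemLp (fun ω => D t ω i) 2 μ)
    (t₀ : ℕ → ℕ) (ht₀ : ∀ T, 2 ≤ T → 1 ≤ t₀ T ∧ t₀ T ≤ T - 1)
    (ht₀lim : Tendsto (fun T : ℕ => (t₀ T : ℝ) / T) atTop (nhds 0))
    (M₁ M₂ M₄ : ℝ)
    (hwsum : ∑ i, w i ≤ M₁)
    (hcov : ∀ t, ∑ i, ∑ j,
      |covar μ (fun ω => V t ω i) (fun ω => V t ω j)| ≤ M₂)
    (hDbound : ∀ t : ℕ, 1 ≤ t → (∫ ω, ∑ i, (D t ω i) ^ 2 ∂μ) ≤ M₄ / t) :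
    limsup (fun T : ℕ => Real.sqrt T *
      ∫ ω, |2 * ((T : ℝ) - (t₀ T : ℝ))⁻¹ *
          (∑ t ∈ Finset.Ico (t₀ T) T, ∑ i, w i * V (t + 1) ω i * D t ω i)| ∂μ)
      atTop ≤ 4 * M₁ * Real.sqrt M₂ * Real.sqrt M₄ := by
  set C := M₁ * √M₂ * √M₄
  have hC : 0 ≤ C := by
    have : 0 ≤ M₁ := (sum_nonneg fun i _ => (hw i).le).trans hwsum
    positivity
  have hZ (t : ℕ) : Integrable (fun ω => ∑ i, w i * V (t + 1) ω i * D t ω i) μ :=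
    integrable_finsetSum _ fun i _ => by
      simpa only [Pi.mul_apply, mul_assoc] using
        ((hV2 (t + 1) i).integrable_mul (hD2 t i)).const_mul (w i)
  have hZC (t : ℕ) (ht : 1 ≤ t) :
      ∫ ω, |∑ i, w i * V (t + 1) ω i * D t ω i| ∂μ ≤ C * (√t)⁻¹ := by
    calc ∫ ω, |∑ i, w i * V (t + 1) ω i * D t ω i| ∂μ
        ≤ (∑ i, w i) * (√M₂ * √(M₄ / t)) :=
          integral_abs_sum_mul_mul_le (fun i => (hw i).le) (hV2 (t + 1)) (hD2 t)
            (fun i => (integral_sq_le_sum_sum_abs_covar (hVmean (t + 1) i)).trans (hcov _))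
            (fun i => (integral_sq_le_integral_sum_sq (hD2 t) i).trans (hDbound t ht))
      _ ≤ C * (√t)⁻¹ := by
          rw [Real.sqrt_div' _ t.cast_nonneg, div_eq_mul_inv]
          exact (mul_le_mul_of_nonneg_right hwsum (by positivity)).trans_eq (by ring)
  have hlim := (tendsto_div_sub_of_tendsto_div_zero ht₀lim).const_mul (4 * C)
  rw [mul_one] at hlim
  have hbound : ∀ᶠ T : ℕ in atTop, √T * ∫ ω, |2 * ((T : ℝ) - t₀ T)⁻¹ *
      ∑ t ∈ Ico (t₀ T) T, ∑ i, w i * V (t + 1) ω i * D t ω i| ∂μ ≤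
      4 * C * (T / (T - t₀ T)) := by
    filter_upwards [eventually_ge_atTop 2] with T hT
    exact sqrt_mul_integral_abs_avg_le hC hZ hZC (ht₀ T hT).1 (by have := ht₀ T hT; omega)
  calc _ ≤ limsup (fun T : ℕ => 4 * C * (T / (T - t₀ T))) atTop :=
        limsup_le_limsup hbound (isCoboundedUnder_le_of_le atTop fun T => by positivity)
          hlim.isBoundedUnder_le
    _ = 4 * M₁ * √M₂ * √M₄ := by rw [hlim.limsup_eq]; ring

/-- Lemma 3 of the paper: under the weight bound `∑ wᵢ ≤ M₁`, the covariance bound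
`∑ᵢ∑ⱼ |Cov(V_{i,t}, V_{j,t})| ≤ M₂` and the discrepancy bound `E[∑ᵢ D_{i,t}²] ≤ M₄/t`,
`limsup_T √T · E[ | (2/(T−t₀)) ∑_{t=t₀}^{T−1} ∑ᵢ wᵢ V_{i,t+1} D_{i,t} | ] ≤ 4 M₁ √M₂ √M₄`. -/
theorem statement2
    {Ω : Type*} [MeasurableSpace Ω] (μ : Measure Ω) [IsProbabilityMeasure μ]
    (n : ℕ) (hn : 1 ≤ n) (w : Fin n → ℝ) (hw : ∀ i, 0 < w i)
    (V : ℕ → Ω → Fin n → ℝ) (hVmeas : ∀ t, Measurable (V t))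
    (hV2 : ∀ t i, MemLp (fun ω => V t ω i) 2 μ)
    (hVindep : iIndepFun V μ)
    (hVid : ∀ s t, IdentDistrib (V s) (V t) μ μ)
    (hVmean : ∀ t i, (∫ ω, V t ω i ∂μ) = 0)
    (S : Matrix (Fin n) (Fin n) ℝ) (hSpd : S.PosDef)
    (hScov : ∀ t i j, covar μ (fun ω => V t ω i) (fun ω => V t ω j) = S i j)
    (D : ℕ → Ω → Fin n → ℝ)
    (hD2 : ∀ t i, MemLp (fun ω => D t ω i) 2 μ)
    (t₀ : ℕ → ℕ) (ht₀ : ∀ T, 2 ≤ T → 1 ≤ t₀ T ∧ t₀ T ≤ T - 1)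
    (ht₀lim : Tendsto (fun T : ℕ => (t₀ T : ℝ) / T) atTop (nhds 0))
    (M₁ M₂ M₄ : ℝ) (hM₁ : 0 < M₁) (hM₂ : 0 < M₂) (hM₄ : 0 < M₄)
    (hwsum : ∑ i, w i ≤ M₁)
    (hcov : ∀ t, ∑ i, ∑ j,
      |covar μ (fun ω => V t ω i) (fun ω => V t ω j)| ≤ M₂)
    (hDbound : ∀ t : ℕ, 1 ≤ t → (∫ ω, ∑ i, (D t ω i) ^ 2 ∂μ) ≤ M₄ / t) :
    limsup (fun T : ℕ => Real.sqrt T *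
      ∫ ω, |2 * ((T : ℝ) - (t₀ T : ℝ))⁻¹ *
          (∑ t ∈ Finset.Ico (t₀ T) T, ∑ i, w i * V (t + 1) ω i * D t ω i)| ∂μ)
      atTop ≤ 4 * M₁ * Real.sqrt M₂ * Real.sqrt M₄ :=
  statement2_general μ n w hw V hV2 hVmean D hD2 t₀ ht₀ ht₀lim M₁ M₂ M₄ hwsum hcov hDbound
end

section
/- Let M be a symmetric positive semidefinite real (n+m) × (n+m) matrix with block decomposition M = [[E, F],[F', G]] where the n × n block E is positive definite. Let Γ be an m × m diagonal matrix with strictly positive diagonal entries, let Φ be any n × m real matrix, let α ∈ [0,1), and let Ψ be any n × m real matrix. Then the n × n matrix E − F Ψ' − Ψ F' + Ψ G Ψ' + (1−α) Ψ Γ Ψ' + α (Ψ ⊙ Φ) Γ (Ψ ⊙ Φ)' is positive definite, where ⊙ denotes the Hadamard (entrywise) product. -/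
open Matrix

/-! With `B = [I, -Ψ]`, the first four terms are `B M Bᵀ`, and adding `(1 - α) ΨΓΨᵀ` gives
`B (M + diag(0, (1 - α) Γ)) Bᵀ`. The middle matrix is positive definite: its quadratic form at
`(x, y)` is at least `(1 - α) yᵀΓy`, which vanishes only for `y = 0`, where it is `xᵀEx`. As `B`
has full row rank the congruence is positive definite, and the Hadamard term is semidefinite. -/

lemma Matrix.PosSemidef.add_fromBlocks_zero_zero_zero_posDef {R n m : Type*} [Ring R]
    [PartialOrder R] [StarRing R] [IsOrderedAddMonoid R] [Fintype n] [Fintype m]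
    {M : Matrix (n ⊕ m) (n ⊕ m) R} (hM : M.PosSemidef) (hM₁₁ : M.toBlocks₁₁.PosDef)
    {P : Matrix m m R} (hP : P.PosDef) : (M + fromBlocks 0 0 0 P).PosDef := by
  have hN : (fromBlocks 0 0 0 P : Matrix (n ⊕ m) (n ⊕ m) R).IsHermitian :=
    isHermitian_fromBlocks_iff.2 ⟨isHermitian_zero, by simp, by simp, hP.1⟩
  refine .of_dotProduct_mulVec_pos (hM.1.add hN) fun z hz => ?_
  obtain ⟨x, y, rfl⟩ : ∃ x y, z = Sum.elim x y := ⟨z ∘ Sum.inl, z ∘ Sum.inr, by simp⟩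
  have hMz := hM.dotProduct_mulVec_nonneg (Sum.elim x y)
  rw [add_mulVec, dotProduct_add, fromBlocks_mulVec]
  simp only [zero_mulVec, add_zero, zero_add, Sum.elim_comp_inr, Function.star_sumElim,
    sumElim_dotProduct_sumElim, dotProduct_zero] at hMz ⊢
  rcases eq_or_ne y 0 with rfl | hy
  · have hx : x ≠ 0 := by rintro rfl; simp at hz
    rw [← fromBlocks_toBlocks M, fromBlocks_mulVec]
    simpa [Function.star_sumElim, sumElim_dotProduct_sumElim] using
      hM₁₁.dotProduct_mulVec_pos hx
  · exact add_pos_of_nonneg_of_pos hMz (hP.dotProduct_mulVec_pos hy)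

lemma Matrix.vecMul_fromCols_one_injective {R n m : Type*} [Ring R] [Fintype n] [DecidableEq n]
    (A : Matrix n m R) : Function.Injective (fromCols (1 : Matrix n n R) A).vecMul := by
  intro x y h
  simpa [vecMul_fromCols] using congrArg (· ∘ Sum.inl) h

lemma Matrix.fromCols_one_neg_mul_fromBlocks_mul_conjTranspose {R n m : Type*} [Ring R]
    [StarRing R] [Fintype n] [Fintype m] [DecidableEq n]
    (E : Matrix n n R) (F : Matrix n m R) (G : Matrix m m R) (Ψ : Matrix n m R) :
    fromCols (1 : Matrix n n R) (-Ψ) * fromBlocks E F Fᴴ G *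
        (fromCols (1 : Matrix n n R) (-Ψ))ᴴ =
      E - F * Ψᴴ - Ψ * Fᴴ + Ψ * G * Ψᴴ := by
  rw [conjTranspose_fromCols_eq_fromRows_conjTranspose, fromCols_mul_fromBlocks,
    fromCols_mul_fromRows]
  simp only [Matrix.one_mul, conjTranspose_one, Matrix.mul_one, conjTranspose_neg,
    Matrix.neg_mul, Matrix.mul_neg, Matrix.add_mul, Matrix.mul_assoc]
  abel

/-- Positive definiteness of the ECM update of the innovation covariance of an
elastic-net-penalised VAR: if the block matrix `M = [[E, F], [F', G]]` is positive
semidefinite with `E` positive definite, `Γ` is diagonal with strictly positive diagonal,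
`α ∈ [0,1)` and `Φ, Ψ` are arbitrary, then
`E − FΨ' − ΨF' + ΨGΨ' + (1−α) ΨΓΨ' + α (Ψ⊙Φ) Γ (Ψ⊙Φ)'` is positive definite. -/
theorem statement13 (n m : ℕ)
    (E : Matrix (Fin n) (Fin n) ℝ) (F : Matrix (Fin n) (Fin m) ℝ)
    (G : Matrix (Fin m) (Fin m) ℝ)
    (hM : (Matrix.fromBlocks E F Fᵀ G).PosSemidef) (hE : E.PosDef)
    (g : Fin m → ℝ) (hg : ∀ j, 0 < g j)
    (Φ : Matrix (Fin n) (Fin m) ℝ)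
    (α : ℝ) (hα0 : 0 ≤ α) (hα1 : α < 1)
    (Ψ : Matrix (Fin n) (Fin m) ℝ) :
    (E - F * Ψᵀ - Ψ * Fᵀ + Ψ * G * Ψᵀ
        + (1 - α) • (Ψ * Matrix.diagonal g * Ψᵀ)
        + α • (Matrix.hadamard Ψ Φ * Matrix.diagonal g * (Matrix.hadamard Ψ Φ)ᵀ)).PosDef := by
  have hD : (diagonal g).PosDef := posDef_diagonal_iff.2 hg
  have hN := hM.add_fromBlocks_zero_zero_zero_posDef (by simpa using hE)
    (hD.smul (sub_pos.2 hα1))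
  rw [fromBlocks_add, add_zero, add_zero, add_zero] at hN
  have hMΨ := hN.mul_mul_conjTranspose_same (vecMul_fromCols_one_injective (-Ψ))
  simp only [← conjTranspose_eq_transpose_of_trivial] at hMΨ ⊢
  rw [fromCols_one_neg_mul_fromBlocks_mul_conjTranspose] at hMΨ
  have hH := (hD.posSemidef.mul_mul_conjTranspose_same (hadamard Ψ Φ)).smul hα0
  convert hMΨ.add_posSemidef hH using 2
  simp only [Matrix.mul_add, Matrix.add_mul, Matrix.mul_smul, Matrix.smul_mul]
  abel
end
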